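/- With A = -λr², B = -Λ - 2λr², C = λr², R = 4Λ + 6λr², R★ = 2Λ + 2λr², ∇_p u̇^p = B, (1/2)∇²R = 3λ∇²r² = 3λ(6y + 2ry'), η = y'²/(4y), and y = 1 - 2M/r - (Λ/3)r² - (λ/5)r⁴, the scalar φ = (1/2)[A² - 2AB + 4B² + 2BC + C²] - (1/6)R² + (1/2)∇²R + (1/2)R★² - (2/3)R R★ + 2(2B + 2C + R★ - 2A)η + 4B∇_p u̇^p + 2C(y'' - 2η) equals -32Mλ/r + 18λ - (20/3)Λλr² - (21/5)λ²r⁴. -/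

import Mathlib

private lemma harada_hasDerivAt (M Λ lam : ℝ) (y : ℝ → ℝ)
    (hy : ∀ s : ℝ, y s = 1 - 2 * M / s - Λ / 3 * s ^ 2 - lam / 5 * s ^ 4)
    (s : ℝ) (hs : s ≠ 0) :
    HasDerivAt y (2 * M / s ^ 2 - 2 * Λ / 3 * s - 4 * lam / 5 * s ^ 3) s := by
  have h : HasDerivAt (fun t : ℝ => 1 - 2 * M / t - Λ / 3 * t ^ 2 - lam / 5 * t ^ 4)
      (2 * M / s ^ 2 - 2 * Λ / 3 * s - 4 * lam / 5 * s ^ 3) s := by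
    have h1 : HasDerivAt (fun t : ℝ => 2 * M / t) (-(2 * M) / s ^ 2) s := by
      simpa [Pi.div_def] using (hasDerivAt_const s (2 * M)).div (hasDerivAt_id s) hs
    have h2 : HasDerivAt (fun t : ℝ => Λ / 3 * t ^ 2) (Λ / 3 * (2 * s)) s := by
      simpa using ((hasDerivAt_pow 2 s).const_mul (Λ / 3))
    have h3 : HasDerivAt (fun t : ℝ => lam / 5 * t ^ 4) (lam / 5 * (4 * s ^ 3)) s := by
      simpa using ((hasDerivAt_pow 4 s).const_mul (lam / 5))
    have := ((hasDerivAt_const s (1 : ℝ)).sub h1).sub h2 |>.sub h3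
    exact this.congr_deriv (by ring)
  have hyy : y = fun t : ℝ => 1 - 2 * M / t - Λ / 3 * t ^ 2 - lam / 5 * t ^ 4 :=
    funext hy
  rw [hyy]; exact h

/-- For the Harada vacuum y = 1 - 2M/r - (Λ/3)r² - (λ/5)r⁴, with
A = -λr², B = -Λ - 2λr², C = λr², R = 4Λ + 6λr², R★ = 2Λ + 2λr²,
∇_p u̇^p = B, (1/2)∇²R = 3λ(6y + 2ry'), η = y'²/(4y), the Altas–Tekin scalar
φ = (1/2)[A² - 2AB + 4B² + 2BC + C²] - (1/6)R² + (1/2)∇²R + (1/2)R★²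
    - (2/3)R R★ + 2(2B + 2C + R★ - 2A)η + 4B∇_p u̇^p + 2C(y'' - 2η)
equals -32Mλ/r + 18λ - (20/3)Λλr² - (21/5)λ²r⁴. -/
theorem altas_tekin_scalar_harada (M Λ lam : ℝ) (y : ℝ → ℝ)
    (hy : ∀ s : ℝ, y s = 1 - 2 * M / s - Λ / 3 * s ^ 2 - lam / 5 * s ^ 4) :
    ∀ r : ℝ, 0 < r → 0 < y r →
      let y' := deriv y r
      let y'' := deriv (deriv y) r
      let η := y' ^ 2 / (4 * y r)
      let A := -lam * r ^ 2
      let B := -Λ - 2 * lam * r ^ 2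
      let C := lam * r ^ 2
      let Rs := 4 * Λ + 6 * lam * r ^ 2
      let Rstar := 2 * Λ + 2 * lam * r ^ 2
      (1/2) * (A ^ 2 - 2 * A * B + 4 * B ^ 2 + 2 * B * C + C ^ 2)
        - (1/6) * Rs ^ 2 + 3 * lam * (6 * y r + 2 * r * y')
        + (1/2) * Rstar ^ 2 - (2/3) * Rs * Rstar
        + 2 * (2 * B + 2 * C + Rstar - 2 * A) * η
        + 4 * B * B + 2 * C * (y'' - 2 * η)
      = -32 * M * lam / r + 18 * lam - (20/3) * Λ * lam * r ^ 2
        - (21/5) * lam ^ 2 * r ^ 4 := by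
  intro r hr hyr
  have hr0 : r ≠ 0 := ne_of_gt hr
  have hd1 : deriv y r = 2 * M / r ^ 2 - 2 * Λ / 3 * r - 4 * lam / 5 * r ^ 3 :=
    (harada_hasDerivAt M Λ lam y hy r hr0).deriv
  have hdfun : Set.EqOn (deriv y)
      (fun s : ℝ => 2 * M / s ^ 2 - 2 * Λ / 3 * s - 4 * lam / 5 * s ^ 3) {s | s ≠ 0} := by
    intro s hs
    exact (harada_hasDerivAt M Λ lam y hy s hs).deriv
  have hopen : IsOpen {s : ℝ | s ≠ 0} := isOpen_ne
  have hd2' : HasDerivAt (fun s : ℝ => 2 * M / s ^ 2 - 2 * Λ / 3 * s - 4 * lam / 5 * s ^ 3)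
      (-(4 * M) / r ^ 3 - 2 * Λ / 3 - 12 * lam / 5 * r ^ 2) r := by
    have h1 : HasDerivAt (fun t : ℝ => 2 * M / t ^ 2)
        (-(2 * M) * (2 * r) / (r ^ 2) ^ 2) r := by
      simpa [Pi.div_def] using (hasDerivAt_const r (2 * M)).div (hasDerivAt_pow 2 r) (pow_ne_zero 2 hr0)
    have h2 : HasDerivAt (fun t : ℝ => 2 * Λ / 3 * t) (2 * Λ / 3) r := by
      simpa using (hasDerivAt_id r).const_mul (2 * Λ / 3)
    have h3 : HasDerivAt (fun t : ℝ => 4 * lam / 5 * t ^ 3)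
        (4 * lam / 5 * (3 * r ^ 2)) r := by
      simpa using (hasDerivAt_pow 3 r).const_mul (4 * lam / 5)
    have := (h1.sub h2).sub h3
    exact this.congr_deriv (by field_simp; ring)
  have hev : deriv y =ᶠ[nhds r]
      (fun s : ℝ => 2 * M / s ^ 2 - 2 * Λ / 3 * s - 4 * lam / 5 * s ^ 3) :=
    Filter.eventuallyEq_of_mem (hopen.mem_nhds hr0) fun s hs => hdfun hs
  have hd2 : deriv (deriv y) r = -(4 * M) / r ^ 3 - 2 * Λ / 3 - 12 * lam / 5 * r ^ 2 := by
    rw [hev.deriv_eq]; exact hd2'.deriv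
  simp only [hd1, hd2, hy r]
  field_simp
  ring
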